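/- With T̃ = N σ₀ σ₁ and Z | H_i ∼ N(Nσᵢ², 2N N_w σᵢ²), the BER (1/2)-weighted sum of misclassification probabilities equals Q(√N |σ₀ − σ₁|/√(2N_w)). Writing σᵢ² = |hᵢ|² P_s + N_w and γ = P_s/N_w this equals Q(√(N/2) |√(|h₀|²γ + 1) − √(|h₁|²γ + 1)|). -/
import Mathlib


open Real MeasureTheory

/-- The Gaussian Q-function. -/
noncomputable def gaussQ (x : ℝ) : ℝ :=
  ∫ t in Set.Ioi x, (2 * Real.pi) ^ (-(1:ℝ)/2) * Real.exp (-t ^ 2 / 2)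

lemma gaussQ_exp_eq : (fun t : ℝ => Real.exp (-t ^ 2 / 2))
    = fun t : ℝ => Real.exp (-(1/2 : ℝ) * t ^ 2) := by
  funext t; ring_nf

lemma gaussQ_total :
    (∫ t : ℝ, (2 * Real.pi) ^ (-(1:ℝ)/2) * Real.exp (-t ^ 2 / 2)) = 1 := by
  have h2π : (0:ℝ) < 2 * Real.pi := by positivity
  have h : (∫ t : ℝ, Real.exp (-t ^ 2 / 2)) = Real.sqrt (2 * Real.pi) := by
    have h1 : (∫ t : ℝ, Real.exp (-(1/2 : ℝ) * t ^ 2)) = Real.sqrt (2 * Real.pi) := by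
      rw [integral_gaussian, show (Real.pi / (1/2 : ℝ)) = 2 * Real.pi by ring]
    rw [← h1]
    exact congrArg _ gaussQ_exp_eq
  rw [MeasureTheory.integral_const_mul, h]
  rw [show (-(1:ℝ)/2) = -(1/2 : ℝ) by ring, Real.rpow_neg h2π.le,
    ← Real.sqrt_eq_rpow]
  field_simp

lemma gaussQ_integrable :
    Integrable (fun t : ℝ => (2 * Real.pi) ^ (-(1:ℝ)/2) * Real.exp (-t ^ 2 / 2)) := by
  have h : Integrable (fun t : ℝ => Real.exp (-(1/2 : ℝ) * t ^ 2)) :=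
    integrable_exp_neg_mul_sq (by norm_num)
  have := h.const_mul ((2 * Real.pi) ^ (-(1:ℝ)/2))
  refine this.congr ?_
  filter_upwards with t
  rw [show (-(1/2 : ℝ) * t ^ 2) = -t ^ 2 / 2 by ring]

lemma gaussQ_neg (x : ℝ) : gaussQ (-x) = 1 - gaussQ x := by
  have hint := gaussQ_integrable
  have h1 : gaussQ (-x)
      = ∫ t in Set.Iic x, (2 * Real.pi) ^ (-(1:ℝ)/2) * Real.exp (-t ^ 2 / 2) := by
    rw [gaussQ, ← neg_neg x, ← integral_comp_neg_Ioi]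
    simp [neg_neg]
  have h2 := intervalIntegral.integral_Iic_add_Ioi (b := x)
    hint.integrableOn hint.integrableOn
  rw [gaussQ_total] at h2
  rw [h1, gaussQ]
  linarith

/-- Asymptotic BER of the suboptimal detector with PSK ambient signals at high SNR:
with `T̃ = Nσ₀σ₁` and `Z | H_i ∼ N(Nσᵢ², 2NN_wσᵢ²)`, the BER equals
`Q(√N|σ₀ − σ₁|/√(2N_w))`, which with `σᵢ² = |hᵢ|²P_s + N_w`, `γ = P_s/N_w` equals
`Q(√(N/2)|√(|h₀|²γ+1) − √(|h₁|²γ+1)|)`. -/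
theorem stmt14 (a0 a1 : ℝ) (ha0 : 0 ≤ a0) (ha1 : 0 ≤ a1) (hne : a0 ≠ a1)
    (Ps Nw : ℝ) (hPs : 0 < Ps) (hNw : 0 < Nw)
    (N : ℝ) (hN : 0 < N)
    (γ σ0 σ1 T : ℝ) (hγ : γ = Ps / Nw)
    (hσ0 : σ0 = Real.sqrt (a0 * Ps + Nw)) (hσ1 : σ1 = Real.sqrt (a1 * Ps + Nw))
    (hT : T = N * σ0 * σ1) :
    (1 / 2) * gaussQ ((T - N * (min σ0 σ1) ^ 2) / Real.sqrt (2 * N * Nw * (min σ0 σ1) ^ 2)) +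
        (1 / 2) * (1 - gaussQ ((T - N * (max σ0 σ1) ^ 2) /
          Real.sqrt (2 * N * Nw * (max σ0 σ1) ^ 2)))
      = gaussQ (Real.sqrt N * |σ0 - σ1| / Real.sqrt (2 * Nw)) ∧
    gaussQ (Real.sqrt N * |σ0 - σ1| / Real.sqrt (2 * Nw)) =
      gaussQ (Real.sqrt (N / 2) * |Real.sqrt (a0 * γ + 1) - Real.sqrt (a1 * γ + 1)|) := by
  have hσ0pos : 0 < σ0 := by
    rw [hσ0]; exact Real.sqrt_pos.mpr (by positivity)
  have hσ1pos : 0 < σ1 := by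
    rw [hσ1]; exact Real.sqrt_pos.mpr (by positivity)
  set m := min σ0 σ1 with hm
  set M := max σ0 σ1 with hM
  have hmpos : 0 < m := lt_min hσ0pos hσ1pos
  have hMpos : 0 < M := lt_of_lt_of_le hmpos (min_le_max)
  have habs : |σ0 - σ1| = M - m := by
    rcases le_total σ0 σ1 with h | h
    · rw [abs_of_nonpos (by linarith), hm, hM, min_eq_left h, max_eq_right h]; ring
    · rw [abs_of_nonneg (by linarith), hm, hM, min_eq_right h, max_eq_left h]
  have hTm : T = N * m * M := by
    rw [hT]; rcases le_total σ0 σ1 with h | h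
    · rw [hm, hM, min_eq_left h, max_eq_right h]
    · rw [hm, hM, min_eq_right h, max_eq_left h]; ring
  have hsqrtN : (0:ℝ) < Real.sqrt N := Real.sqrt_pos.mpr hN
  have hs2Nw : (0:ℝ) < Real.sqrt (2 * Nw) := Real.sqrt_pos.mpr (by positivity)
  have hNN : Real.sqrt N * Real.sqrt N = N := Real.mul_self_sqrt hN.le
  have key : ∀ s : ℝ, 0 < s →
      Real.sqrt (2 * N * Nw * s ^ 2) = Real.sqrt N * Real.sqrt (2 * Nw) * s := by
    intro s hs
    rw [show 2 * N * Nw * s ^ 2 = N * (2 * Nw) * s ^ 2 by ring,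
      Real.sqrt_mul (by positivity), Real.sqrt_mul hN.le, Real.sqrt_sq hs.le]
  have hA : (T - N * m ^ 2) / Real.sqrt (2 * N * Nw * m ^ 2)
      = Real.sqrt N * |σ0 - σ1| / Real.sqrt (2 * Nw) := by
    rw [key m hmpos, hTm, habs, div_eq_div_iff (by positivity) hs2Nw.ne']
    linear_combination (-(m * (M - m) * Real.sqrt (2 * Nw))) * hNN
  have hB : (T - N * M ^ 2) / Real.sqrt (2 * N * Nw * M ^ 2)
      = -(Real.sqrt N * |σ0 - σ1| / Real.sqrt (2 * Nw)) := by
    rw [key M hMpos, hTm, habs, neg_div', div_eq_div_iff (by positivity) hs2Nw.ne']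
    linear_combination (M * (M - m) * Real.sqrt (2 * Nw)) * hNN
  constructor
  · rw [hA, hB, gaussQ_neg]; ring
  · congr 1
    have hσ0' : σ0 = Real.sqrt Nw * Real.sqrt (a0 * γ + 1) := by
      rw [hσ0, hγ, ← Real.sqrt_mul hNw.le]
      congr 1; field_simp
    have hσ1' : σ1 = Real.sqrt Nw * Real.sqrt (a1 * γ + 1) := by
      rw [hσ1, hγ, ← Real.sqrt_mul hNw.le]
      congr 1; field_simp
    have hsNw : (0:ℝ) < Real.sqrt Nw := Real.sqrt_pos.mpr hNw
    have h2 : (0:ℝ) < Real.sqrt 2 := Real.sqrt_pos.mpr (by norm_num)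
    rw [hσ0', hσ1', ← mul_sub, abs_mul, abs_of_pos hsNw]
    rw [show (2 * Nw) = Nw * 2 by ring, Real.sqrt_mul hNw.le,
      Real.sqrt_div hN.le 2]
    field_simp
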